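/- arXiv:2201.12522 — 2 statements merged into one kernel-verified Lean document; each statement's English description precedes it below -/
import Mathlib

section
/- Let H̄ be a symmetric positive definite n×n matrix. Then the matrix P = (n / trace(H̄^{-1})) · H̄^{-1} is symmetric positive definite, satisfies trace(P) = n, and the largest eigenvalue of PH̄ equals n / trace(H̄^{-1}), which is the minimum possible largest eigenvalue of PH̄ over all symmetric positive definite P commuting with H̄ (sharing eigenvectors with H̄) with trace(P) = n. -/
/-!
Since `P H = c • 1` with `c = n / tr(H⁻¹)`, every eigenvalue of `P H` equals `c`. For minimality,
if `λ` bounds the eigenvalues of the Hermitian matrix `Q H`, then `λ • 1 - Q H` is positive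
semidefinite, and so is `H⁻¹`; the trace of a product of two such matrices is nonnegative, which
gives `λ tr(H⁻¹) - tr(Q) ≥ 0`, i.e. `λ ≥ n / tr(H⁻¹)`.
-/

open Matrix

namespace Matrix

variable {n 𝕜 : Type*} [Fintype n] [RCLike 𝕜]

open scoped MatrixOrder ComplexOrder

lemma PosSemidef.trace_mul_nonneg {A B : Matrix n n 𝕜} (hA : A.PosSemidef) (hB : B.PosSemidef) :
    0 ≤ (A * B).trace := by
  classical
  obtain ⟨C, rfl⟩ := CStarAlgebra.nonneg_iff_eq_star_mul_self.mp hA.nonneg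
  rw [mul_assoc, trace_mul_comm, star_eq_conjTranspose]
  exact (hB.mul_mul_conjTranspose_same C).trace_nonneg

variable [DecidableEq n]

lemma IsHermitian.posSemidef_smul_one_sub {A : Matrix n n 𝕜} (hA : A.IsHermitian) {c : ℝ}
    (hc : ∀ i, hA.eigenvalues i ≤ c) : (c • (1 : Matrix n n 𝕜) - A).PosSemidef := by
  rw [← le_iff, ← Algebra.algebraMap_eq_smul_one]
  refine le_algebraMap_of_spectrum_le (fun x hx => ?_) hA
  obtain ⟨i, rfl⟩ := hA.spectrum_real_eq_range_eigenvalues ▸ hx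
  exact hc i

lemma IsHermitian.eigenvalues_eq_of_eq_smul_one {A : Matrix n n 𝕜} (hA : A.IsHermitian) {c : ℝ}
    (h : A = c • (1 : Matrix n n 𝕜)) (i : n) : hA.eigenvalues i = c := by
  have : Nonempty n := ⟨i⟩
  have hspec : spectrum ℝ A = {c} := by
    rw [h, ← Algebra.algebraMap_eq_smul_one]
    exact spectrum.scalar_eq c
  simpa [hspec] using hA.eigenvalues_mem_spectrum_real i

lemma IsHermitian.trace_mul_le {A B : Matrix n n ℝ} (hA : A.IsHermitian) (hB : B.PosSemidef)
    {c : ℝ} (hc : ∀ i, hA.eigenvalues i ≤ c) : (A * B).trace ≤ c * B.trace := by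
  have := (hA.posSemidef_smul_one_sub hc).trace_mul_nonneg hB
  rw [Matrix.sub_mul, trace_sub, smul_mul, one_mul, trace_smul, smul_eq_mul] at this
  linarith

end Matrix

theorem stmt_8_general {n : ℕ} (hn : 0 < n) (H : Matrix (Fin n) (Fin n) ℝ)
    (hH : H.PosDef) :
    let P : Matrix (Fin n) (Fin n) ℝ := ((n : ℝ) / (H⁻¹).trace) • H⁻¹
    P.IsSymm ∧ P.PosDef ∧ P.trace = (n : ℝ) ∧
    P * H = ((n : ℝ) / (H⁻¹).trace) • (1 : Matrix (Fin n) (Fin n) ℝ) ∧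
    (∀ hPH : (P * H).IsHermitian,
      (⨆ i, hPH.eigenvalues i) = (n : ℝ) / (H⁻¹).trace) ∧
    (∀ Q : Matrix (Fin n) (Fin n) ℝ, Q.IsSymm → Q.PosDef →
      Q * H = H * Q → Q.trace = (n : ℝ) →
      ∀ hQH : (Q * H).IsHermitian,
        (n : ℝ) / (H⁻¹).trace ≤ ⨆ i, hQH.eigenvalues i) := by
  intro P
  have : Nonempty (Fin n) := ⟨⟨0, hn⟩⟩
  have htr : 0 < (H⁻¹).trace := hH.inv.trace_pos
  have hPpos : P.PosDef := hH.inv.smul (by positivity)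
  have hdet : IsUnit H.det := (isUnit_iff_isUnit_det H).mp hH.isUnit
  have hPH : P * H = ((n : ℝ) / (H⁻¹).trace) • 1 := by rw [smul_mul, nonsing_inv_mul H hdet]
  refine ⟨isHermitian_iff_isSymm.mp hPpos.isHermitian, hPpos, ?_, hPH, fun hPH' => ?_,
    fun Q _ _ _ hQ hQH => ?_⟩
  · rw [trace_smul, smul_eq_mul, div_mul_cancel₀ _ htr.ne']
  · simp only [hPH'.eigenvalues_eq_of_eq_smul_one hPH, ciSup_const]
  · have hQ_eq : Q.trace = (Q * H * H⁻¹).trace := by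
      rw [Matrix.mul_assoc, mul_nonsing_inv H hdet, mul_one]
    rw [div_le_iff₀ htr, ← hQ, hQ_eq]
    exact hQH.trace_mul_le hH.inv.posSemidef fun i => le_ciSup (Finite.bddAbove_range _) i

/-- For symmetric positive definite H̄, the matrix
    P = (n / trace(H̄⁻¹)) • H̄⁻¹ is symmetric positive definite, has trace n,
    P H̄ = (n / trace(H̄⁻¹)) • 1 (so its largest eigenvalue is n / trace(H̄⁻¹)),
    and this is minimal among symmetric positive definite Q commuting with H̄
    with trace(Q) = n. -/
theorem stmt_8 {n : ℕ} (hn : 0 < n) (H : Matrix (Fin n) (Fin n) ℝ)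
    (hHsymm : H.IsSymm) (hH : H.PosDef) :
    let P : Matrix (Fin n) (Fin n) ℝ := ((n : ℝ) / (H⁻¹).trace) • H⁻¹
    P.IsSymm ∧ P.PosDef ∧ P.trace = (n : ℝ) ∧
    P * H = ((n : ℝ) / (H⁻¹).trace) • (1 : Matrix (Fin n) (Fin n) ℝ) ∧
    (∀ hPH : (P * H).IsHermitian,
      (⨆ i, hPH.eigenvalues i) = (n : ℝ) / (H⁻¹).trace) ∧
    (∀ Q : Matrix (Fin n) (Fin n) ℝ, Q.IsSymm → Q.PosDef →
      Q * H = H * Q → Q.trace = (n : ℝ) →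
      ∀ hQH : (Q * H).IsHermitian,
        (n : ℝ) / (H⁻¹).trace ≤ ⨆ i, hQH.eigenvalues i) :=
  stmt_8_general hn H hH
end

section
/- Suppose g_1,...,g_m are vectors in R^n, η_1,...,η_m ∈ (0, η_m_max], P is symmetric positive definite, H̄ is symmetric positive semidefinite, and L_0 ≥ ∑_{i=1}^m η_i g_i^T P g_i. Then (1/2) (∑_{i=1}^m η_i g_i)^T P H̄ P (∑_{i=1}^m η_i g_i) ≤ (1/2) m η_m_max σ_max(P H̄) L_0. -/
/-!
With `Q` the square root of `P` and `S = Q H̄ Q`, we have `vᵀ P H̄ P v = (Q v)ᵀ S (Q v)`, and the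
Loewner bound `S ≤ λ_max(S) • 1` gives `vᵀ P H̄ P v ≤ λ_max(S) · vᵀ P v`. For `v = ∑ ηᵢ gᵢ`,
Cauchy–Schwarz applied to `Q v = ∑ ηᵢ Q gᵢ` gives `vᵀ P v ≤ m ∑ ηᵢ² gᵢᵀ P gᵢ ≤ m η_max L₀`;
the bound can be multiplied through because `S` is positive semidefinite, so `λ_max(S) ≥ 0`.
-/

open Matrix Finset

open scoped ComplexOrder in
/-- The positive semidefinite square root of a positive semidefinite matrix, as defined in
Mathlib (December 2024) and since removed. -/
noncomputable def Matrix.PosSemidef.sqrt {n 𝕜 : Type*} [Fintype n] [DecidableEq n] [RCLike 𝕜]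
    {A : Matrix n n 𝕜} (hA : A.PosSemidef) : Matrix n n 𝕜 :=
  hA.1.eigenvectorUnitary.1 * diagonal ((↑) ∘ (√·) ∘ hA.1.eigenvalues) *
  (star hA.1.eigenvectorUnitary : Matrix n n 𝕜)

open scoped MatrixOrder ComplexOrder

namespace Matrix

section Sqrt

variable {n 𝕜 : Type*} [Fintype n] [DecidableEq n] [RCLike 𝕜] {A : Matrix n n 𝕜}

lemma PosSemidef.sqrt_eq_cfc (hA : A.PosSemidef) : hA.sqrt = cfc Real.sqrt A := by
  rw [hA.1.cfc_eq]
  rfl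

lemma PosSemidef.isHermitian_sqrt (hA : A.PosSemidef) : hA.sqrt.IsHermitian := by
  rw [hA.sqrt_eq_cfc]
  exact cfc_predicate _ _

lemma PosSemidef.sqrt_mul_self (hA : A.PosSemidef) : hA.sqrt * hA.sqrt = A := by
  have hspec : ∀ x ∈ spectrum ℝ A, 0 ≤ x :=
    fun x hx => spectrum_nonneg_of_nonneg (nonneg_iff_posSemidef.mpr hA) hx
  rw [hA.sqrt_eq_cfc, ← cfc_mul Real.sqrt Real.sqrt A]
  conv_rhs => rw [← cfc_id' ℝ A]
  exact cfc_congr fun x hx => Real.mul_self_sqrt (hspec x hx)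

end Sqrt

variable {n : Type*} [Fintype n]

lemma dotProduct_mulVec_le_iSup_eigenvalues_mul [DecidableEq n] {S : Matrix n n ℝ}
    (hS : S.IsHermitian) (x : n → ℝ) :
    x ⬝ᵥ S *ᵥ x ≤ (⨆ i, hS.eigenvalues i) * (x ⬝ᵥ x) := by
  have hle : S ≤ algebraMap ℝ _ (⨆ i, hS.eigenvalues i) := by
    refine le_algebraMap_of_spectrum_le (fun r hr => ?_) hS.isSelfAdjoint
    obtain ⟨i, rfl⟩ := hS.spectrum_real_eq_range_eigenvalues ▸ hr
    exact le_ciSup (Set.finite_range _).bddAbove i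
  have := (le_iff.mp hle).dotProduct_mulVec_nonneg x
  simp only [star_trivial, Algebra.algebraMap_eq_smul_one, sub_mulVec, smul_mulVec,
    one_mulVec, dotProduct_sub, dotProduct_smul, smul_eq_mul] at this
  linarith

lemma dotProduct_mulVec_mul_mul (A M : Matrix n n ℝ) (v : n → ℝ) :
    v ⬝ᵥ (Aᵀ * M * A) *ᵥ v = (A *ᵥ v) ⬝ᵥ M *ᵥ (A *ᵥ v) := by
  rw [← mulVec_mulVec, ← mulVec_mulVec, dotProduct_mulVec, vecMul_transpose]

lemma sum_dotProduct_sum_le_card_mul {ι : Type*} (s : Finset ι) (x : ι → n → ℝ) :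
    (∑ i ∈ s, x i) ⬝ᵥ (∑ i ∈ s, x i) ≤ #s * ∑ i ∈ s, x i ⬝ᵥ x i := by
  simp only [dotProduct, Finset.sum_apply, ← sq]
  rw [Finset.sum_comm, Finset.mul_sum]
  gcongr
  exact sq_sum_le_card_mul_sum_sq

variable [DecidableEq n] {P : Matrix n n ℝ}

lemma PosSemidef.transpose_sqrt (hP : P.PosSemidef) : hP.sqrtᵀ = hP.sqrt := by
  rw [← conjTranspose_eq_transpose_of_trivial]
  exact hP.isHermitian_sqrt

lemma PosSemidef.dotProduct_mulVec_eq_sqrt_mulVec_dotProduct (hP : P.PosSemidef) (x : n → ℝ) :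
    x ⬝ᵥ P *ᵥ x = (hP.sqrt *ᵥ x) ⬝ᵥ (hP.sqrt *ᵥ x) := by
  calc x ⬝ᵥ P *ᵥ x = x ⬝ᵥ (hP.sqrtᵀ * 1 * hP.sqrt) *ᵥ x := by
        rw [Matrix.mul_one, hP.transpose_sqrt, hP.sqrt_mul_self]
    _ = (hP.sqrt *ᵥ x) ⬝ᵥ (hP.sqrt *ᵥ x) := by rw [dotProduct_mulVec_mul_mul, one_mulVec]

lemma PosSemidef.sum_dotProduct_mulVec_sum_le_card_mul {ι : Type*} (hP : P.PosSemidef)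
    (s : Finset ι) (x : ι → n → ℝ) :
    (∑ i ∈ s, x i) ⬝ᵥ P *ᵥ (∑ i ∈ s, x i) ≤ #s * ∑ i ∈ s, x i ⬝ᵥ P *ᵥ x i := by
  rw [hP.dotProduct_mulVec_eq_sqrt_mulVec_dotProduct, mulVec_sum]
  simp only [hP.dotProduct_mulVec_eq_sqrt_mulVec_dotProduct]
  exact sum_dotProduct_sum_le_card_mul s fun i => hP.sqrt *ᵥ x i

lemma PosSemidef.dotProduct_mulVec_mul_mul_le (hP : P.PosSemidef) (H : Matrix n n ℝ)
    (hS : (hP.sqrt * H * hP.sqrt).IsHermitian) (v : n → ℝ) :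
    v ⬝ᵥ (P * H * P) *ᵥ v ≤ (⨆ i, hS.eigenvalues i) * (v ⬝ᵥ P *ᵥ v) := by
  have hPHP : P * H * P = hP.sqrtᵀ * (hP.sqrt * H * hP.sqrt) * hP.sqrt := by
    conv_lhs => rw [← hP.sqrt_mul_self]
    simp only [hP.transpose_sqrt, Matrix.mul_assoc]
  rw [hPHP, dotProduct_mulVec_mul_mul, hP.dotProduct_mulVec_eq_sqrt_mulVec_dotProduct]
  exact dotProduct_mulVec_le_iSup_eigenvalues_mul hS _

lemma PosSemidef.weighted_sum_dotProduct_mulVec_le {ι : Type*} [Fintype ι] (hP : P.PosSemidef)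
    (g : ι → n → ℝ) {η : ι → ℝ} {ηmax : ℝ} (hη₀ : ∀ i, 0 ≤ η i) (hηmax : ∀ i, η i ≤ ηmax) :
    (∑ i, η i • g i) ⬝ᵥ P *ᵥ (∑ i, η i • g i) ≤
      Fintype.card ι * ηmax * ∑ i, η i * (g i ⬝ᵥ P *ᵥ g i) := by
  have hq : ∀ i, 0 ≤ g i ⬝ᵥ P *ᵥ g i := fun i => by
    simpa using hP.dotProduct_mulVec_nonneg (g i)
  calc (∑ i, η i • g i) ⬝ᵥ P *ᵥ (∑ i, η i • g i)
      ≤ Fintype.card ι * ∑ i, (η i • g i) ⬝ᵥ P *ᵥ (η i • g i) :=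
        hP.sum_dotProduct_mulVec_sum_le_card_mul univ _
    _ = Fintype.card ι * ∑ i, η i * (η i * (g i ⬝ᵥ P *ᵥ g i)) := by
        simp only [mulVec_smul, smul_dotProduct, dotProduct_smul, smul_eq_mul]
    _ ≤ Fintype.card ι * ∑ i, ηmax * (η i * (g i ⬝ᵥ P *ᵥ g i)) := by
        gcongr with i
        · exact mul_nonneg (hη₀ i) (hq i)
        · exact hηmax i
    _ = Fintype.card ι * ηmax * ∑ i, η i * (g i ⬝ᵥ P *ᵥ g i) := by
        rw [← Finset.mul_sum, mul_assoc]

end Matrix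

theorem stmt_11_general {n m : ℕ} (P H : Matrix (Fin n) (Fin n) ℝ)
    (hP : P.PosDef) (hH : H.PosSemidef)
    (hS : (hP.posSemidef.sqrt * H * hP.posSemidef.sqrt).IsHermitian)
    (g : Fin m → (Fin n → ℝ)) (η : Fin m → ℝ) (ηmax : ℝ)
    (hη : ∀ i, 0 < η i ∧ η i ≤ ηmax) (L₀ : ℝ)
    (hL₀ : (∑ i, η i * ((g i) ⬝ᵥ P.mulVec (g i))) ≤ L₀) :
    (1 / 2 : ℝ) * ((∑ i, η i • g i) ⬝ᵥ (P * H * P).mulVec (∑ i, η i • g i)) ≤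
      (1 / 2 : ℝ) * m * ηmax * (⨆ i, hS.eigenvalues i) * L₀ := by
  have hSpsd : (hP.posSemidef.sqrt * H * hP.posSemidef.sqrt).PosSemidef := by
    simpa only [hP.posSemidef.isHermitian_sqrt.eq] using
      hH.conjTranspose_mul_mul_same hP.posSemidef.sqrt
  have hσ : 0 ≤ ⨆ i, hS.eigenvalues i := Real.iSup_nonneg hSpsd.eigenvalues_nonneg
  have hmη : 0 ≤ (m : ℝ) * ηmax := by
    rcases m with _ | k
    · simp
    · exact mul_nonneg (Nat.cast_nonneg _) ((hη 0).1.le.trans (hη 0).2)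
  have hweighted := hP.posSemidef.weighted_sum_dotProduct_mulVec_le g
    (fun i => (hη i).1.le) (fun i => (hη i).2)
  rw [Fintype.card_fin] at hweighted
  calc (1 / 2 : ℝ) * ((∑ i, η i • g i) ⬝ᵥ (P * H * P) *ᵥ (∑ i, η i • g i))
      ≤ 1 / 2 * ((⨆ i, hS.eigenvalues i) * ((∑ i, η i • g i) ⬝ᵥ P *ᵥ (∑ i, η i • g i))) := by
        gcongr
        exact hP.posSemidef.dotProduct_mulVec_mul_mul_le H hS _
    _ ≤ 1 / 2 * ((⨆ i, hS.eigenvalues i) * (m * ηmax * L₀)) := by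
        gcongr
        exact hweighted.trans (mul_le_mul_of_nonneg_left hL₀ hmη)
    _ = (1 / 2 : ℝ) * m * ηmax * (⨆ i, hS.eigenvalues i) * L₀ := by ring

/-- Upper bound on the recursive least loss:
    (1/2)(∑ η_i g_i)ᵀ P H̄ P (∑ η_i g_i) ≤ (1/2) m η_max σ_max(P H̄) L₀,
    where σ_max(P H̄) is the largest eigenvalue of P^{1/2} H̄ P^{1/2} and
    L₀ ≥ ∑ η_i g_iᵀ P g_i. -/
theorem stmt_11 {n m : ℕ} (hn : 0 < n) (P H : Matrix (Fin n) (Fin n) ℝ)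
    (hPsymm : P.IsSymm) (hP : P.PosDef) (hH : H.PosSemidef)
    (hS : (hP.posSemidef.sqrt * H * hP.posSemidef.sqrt).IsHermitian)
    (g : Fin m → (Fin n → ℝ)) (η : Fin m → ℝ) (ηmax : ℝ)
    (hη : ∀ i, 0 < η i ∧ η i ≤ ηmax) (L₀ : ℝ)
    (hL₀ : (∑ i, η i * ((g i) ⬝ᵥ P.mulVec (g i))) ≤ L₀) :
    (1 / 2 : ℝ) * ((∑ i, η i • g i) ⬝ᵥ (P * H * P).mulVec (∑ i, η i • g i)) ≤
      (1 / 2 : ℝ) * m * ηmax * (⨆ i, hS.eigenvalues i) * L₀ :=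
  stmt_11_general P H hP hH hS g η ηmax hη L₀ hL₀
end
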